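/- With the recursive sequence of rational functions r_0(z) = z, r_1(z) = ε_1/(z - a_1), r_{n+2} = r_n + ε_{n+2}/(r_{n+1} - a_{n+2}) (ε_n ≠ 0), assume for every n that: the pole sets of r_n and r_{n+1} are disjoint, all poles of r_n are simple, and the zeros of r_{n+1} - a_{n+2} are simple and disjoint from the poles of r_n. Then the number of poles of r_n equals the n-th Fibonacci number k_n (k_0 = k_1 = 1, k_{n+2} = k_{n+1} + k_n), and all poles of r_n are simple. -/
import Mathlib


open scoped OnePoint

/-- The set of poles of a rational function, as a subset of the Riemann sphere `ℂ ∪ {∞}`. -/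
def poleSet (f : RatFunc ℂ) : Set (OnePoint ℂ) :=
  {x | ∃ z : ℂ, x = (z : OnePoint ℂ) ∧ f.denom.eval z = 0} ∪
    {x | x = ∞ ∧ f.denom.natDegree < f.num.natDegree}

/-- The set of solutions of `f = c` on the Riemann sphere `ℂ ∪ {∞}`. -/
def solSet (f : RatFunc ℂ) (c : ℂ) : Set (OnePoint ℂ) :=
  {x | ∃ z : ℂ, x = (z : OnePoint ℂ) ∧ f.denom.eval z ≠ 0 ∧
      f.num.eval z = c * f.denom.eval z} ∪
    {x | x = ∞ ∧ f.num.natDegree ≤ f.denom.natDegree ∧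
      f.num.coeff f.denom.natDegree = c * f.denom.leadingCoeff}

/-- All poles of `f` are simple: every root of the denominator is simple and the possible
pole at `∞` is simple. -/
def SimplePoles (f : RatFunc ℂ) : Prop :=
  (∀ z : ℂ, f.denom.rootMultiplicity z ≤ 1) ∧ f.num.natDegree ≤ f.denom.natDegree + 1

set_option linter.unusedVariables false

open Polynomial RatFunc

lemma eval_ne_zero_of_isCoprime {p q : ℂ[X]} (h : IsCoprime p q) {z : ℂ}
    (hp : p.eval z = 0) : q.eval z ≠ 0 := by
  obtain ⟨s, t, hst⟩ := h
  intro hq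
  have := congrArg (Polynomial.eval z) hst
  simp [hp, hq] at this

lemma coprime_of_no_common_root {p q : ℂ[X]} (hp : p ≠ 0)
    (h : ∀ z : ℂ, p.eval z = 0 → q.eval z ≠ 0) : IsCoprime p q := by
  classical
  rw [← EuclideanDomain.gcd_isUnit_iff]
  by_contra hu
  have hd0 : EuclideanDomain.gcd p q ≠ 0 := by
    intro h0
    exact hp (EuclideanDomain.gcd_eq_zero_iff.mp h0).1
  have hdeg : 0 < (EuclideanDomain.gcd p q).degree := by
    rcases lt_or_ge 0 (EuclideanDomain.gcd p q).degree with h' | h'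
    · exact h'
    · exact absurd (Polynomial.isUnit_iff_degree_eq_zero.mpr
        (le_antisymm h' (zero_le_degree_iff.mpr hd0))) hu
  obtain ⟨z, hz⟩ := Complex.exists_root hdeg
  obtain ⟨P, hP⟩ := EuclideanDomain.gcd_dvd_left p q
  obtain ⟨Q, hQ⟩ := EuclideanDomain.gcd_dvd_right p q
  have hpz : p.eval z = 0 := by rw [hP]; simp [hz.eq_zero]
  have hqz : q.eval z = 0 := by rw [hQ]; simp [hz.eq_zero]
  exact h z hpz hqz

lemma num_denom_eq_of_coprime {A B : ℂ[X]} (hB : B.Monic) (hcop : IsCoprime A B)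
    {f : RatFunc ℂ} (hf : f = algebraMap ℂ[X] (RatFunc ℂ) A / algebraMap ℂ[X] (RatFunc ℂ) B) :
    f.num = A ∧ f.denom = B := by
  have hB0 : B ≠ 0 := hB.ne_zero
  have h1 : f.num * B = A * f.denom := (num_mul_eq_mul_denom_iff hB0).mpr hf
  have hd : f.denom ∣ B := (denom_dvd hB0).mpr ⟨A, hf⟩
  have hBd : B ∣ f.denom := by
    have h2 : B ∣ A * f.denom := ⟨f.num, by linear_combination -h1⟩
    exact (hcop.symm.dvd_of_dvd_mul_left h2)
  have hden : f.denom = B :=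
    Polynomial.eq_of_monic_of_associated (monic_denom f) hB (associated_of_dvd_dvd hd hBd)
  refine ⟨?_, hden⟩
  have := h1
  rw [hden] at this
  exact mul_right_cancel₀ hB0 this

lemma ncard_poleSet (f : RatFunc ℂ) (h : ∀ z : ℂ, f.denom.rootMultiplicity z ≤ 1) :
    (poleSet f).ncard =
      f.denom.natDegree + (if f.denom.natDegree < f.num.natDegree then 1 else 0) := by
  classical
  have hq0 : f.denom ≠ 0 := f.denom_ne_zero
  have hset : poleSet f =
      ↑(f.denom.roots.toFinset.image (fun z : ℂ => (z : OnePoint ℂ)) ∪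
        (if f.denom.natDegree < f.num.natDegree then {∞} else ∅)) := by
    ext x
    constructor
    · rintro (⟨z, rfl, hz⟩ | ⟨rfl, hlt⟩)
      · refine Finset.mem_coe.mpr (Finset.mem_union_left _ ?_)
        exact Finset.mem_image.mpr ⟨z, Multiset.mem_toFinset.mpr
          (Polynomial.mem_roots'.mpr ⟨hq0, hz⟩), rfl⟩
      · refine Finset.mem_coe.mpr (Finset.mem_union_right _ ?_)
        rw [if_pos hlt]
        exact Finset.mem_singleton_self _
    · intro hx
      rcases Finset.mem_union.mp (Finset.mem_coe.mp hx) with hx | hx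
      · obtain ⟨z, hz, rfl⟩ := Finset.mem_image.mp hx
        exact Or.inl ⟨z, rfl, (Polynomial.mem_roots'.mp (Multiset.mem_toFinset.mp hz)).2⟩
      · by_cases hlt : f.denom.natDegree < f.num.natDegree
        · rw [if_pos hlt, Finset.mem_singleton] at hx
          exact Or.inr ⟨hx, hlt⟩
        · rw [if_neg hlt] at hx
          exact absurd hx (Finset.notMem_empty x)
  rw [hset, Set.ncard_coe_finset]
  have hnodup : f.denom.roots.Nodup := by
    rw [Multiset.nodup_iff_count_le_one]
    intro z
    rw [Polynomial.count_roots]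
    exact h z
  have hcard1 : (f.denom.roots.toFinset.image (fun z : ℂ => (z : OnePoint ℂ))).card
      = f.denom.natDegree := by
    rw [Finset.card_image_of_injective _ OnePoint.coe_injective,
      Multiset.toFinset_card_of_nodup hnodup,
      ← Polynomial.splits_iff_card_roots.mp (IsAlgClosed.splits f.denom)]
  rw [Finset.card_union_of_disjoint, hcard1]
  · congr 1
    split_ifs <;> simp
  · split_ifs
    · simp only [Finset.disjoint_singleton_right, Finset.mem_image]
      rintro ⟨z, -, hz⟩
      exact (OnePoint.coe_ne_infty z) hz
    · simp

lemma step_lemma {c e : ℂ} (he : e ≠ 0) {rn rn1 rn2 : RatFunc ℂ}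
    (hrec : rn2 = rn + RatFunc.C e / (rn1 - RatFunc.C c))
    (hdisj : poleSet rn ∩ poleSet rn1 = ∅)
    (hsn : SimplePoles rn) (hsn1 : SimplePoles rn1) (hsn2 : SimplePoles rn2)
    (hsol : solSet rn1 c ∩ poleSet rn = ∅)
    {kn kn1 : ℕ} (hkn : (poleSet rn).ncard = kn) (hkn1 : (poleSet rn1).ncard = kn1)
    (hknpos : 1 ≤ kn) (hkn1pos : 1 ≤ kn1) :
    (poleSet rn2).ncard = kn1 + kn := by
  classical
  rw [Set.eq_empty_iff_forall_notMem] at hdisj hsol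
  set u := rn.num with hu_def
  set v := rn.denom with hv_def
  set p := rn1.num with hp_def
  set q := rn1.denom with hq_def
  have cnt_n : v.natDegree + (if v.natDegree < u.natDegree then 1 else 0) = kn := by
    rw [← hkn, ncard_poleSet rn hsn.1]
  have cnt_n1 : q.natDegree + (if q.natDegree < p.natDegree then 1 else 0) = kn1 := by
    rw [← hkn1, ncard_poleSet rn1 hsn1.1]
  have hv0 : v ≠ 0 := rn.denom_ne_zero
  have hq0 : q ≠ 0 := rn1.denom_ne_zero
  have hvM : v.Monic := rn.monic_denom
  have hqM : q.Monic := rn1.monic_denom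
  have cop_uv : IsCoprime u v := rn.isCoprime_num_denom
  have cop_pq : IsCoprime p q := rn1.isCoprime_num_denom
  have hdu_le : u.natDegree ≤ v.natDegree + 1 := hsn.2
  have hdp_le : p.natDegree ≤ q.natDegree + 1 := hsn1.2
  have hu0 : u ≠ 0 := by
    intro h0
    have hrn : rn = 0 := RatFunc.num_eq_zero_iff.mp h0
    have hv1 : v = 1 := by rw [hv_def, hrn, RatFunc.denom_zero]
    rw [h0, hv1] at cnt_n
    simp only [Polynomial.natDegree_one, Polynomial.natDegree_zero, lt_irrefl, if_neg,
      Nat.lt_irrefl, if_false, add_zero] at cnt_n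
    omega
  set g := p - Polynomial.C c * q with hg_def
  have cop_gq : IsCoprime g q := by
    have h1 : g = p + q * (-Polynomial.C c) := by rw [hg_def]; ring
    rw [h1]; exact cop_pq.add_mul_left_left _
  have hg0 : g ≠ 0 := by
    intro h0
    have hqu : IsUnit q := isCoprime_zero_left.mp (by rwa [h0] at cop_gq)
    have hq1 : q = 1 := hqM.eq_one_of_isUnit hqu
    have hpq : p = Polynomial.C c * q := by
      have := h0; rw [hg_def] at this; linear_combination this
    rw [hpq, hq1] at cnt_n1
    simp only [mul_one, Polynomial.natDegree_one, Polynomial.natDegree_C, lt_irrefl, if_false,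
      add_zero, if_neg (lt_irrefl 0)] at cnt_n1
    omega
  have hrn1 : algebraMap ℂ[X] (RatFunc ℂ) p / algebraMap ℂ[X] (RatFunc ℂ) q = rn1 :=
    rn1.num_div_denom
  have hrn0 : algebraMap ℂ[X] (RatFunc ℂ) u / algebraMap ℂ[X] (RatFunc ℂ) v = rn :=
    rn.num_div_denom
  have hqz : algebraMap ℂ[X] (RatFunc ℂ) q ≠ 0 := RatFunc.algebraMap_ne_zero hq0
  have hvz : algebraMap ℂ[X] (RatFunc ℂ) v ≠ 0 := RatFunc.algebraMap_ne_zero hv0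
  have hgz : algebraMap ℂ[X] (RatFunc ℂ) g ≠ 0 := RatFunc.algebraMap_ne_zero hg0
  have erep : rn1 - RatFunc.C c = algebraMap ℂ[X] (RatFunc ℂ) g / algebraMap ℂ[X] (RatFunc ℂ) q := by
    rw [hg_def, map_sub, map_mul, RatFunc.algebraMap_C, ← hrn1]
    field_simp
  set N := u * g + Polynomial.C e * (q * v) with hN_def
  have key : rn2 = algebraMap ℂ[X] (RatFunc ℂ) N / algebraMap ℂ[X] (RatFunc ℂ) (v * g) := by
    rw [hrec, erep, ← hrn0, hN_def, map_add, map_mul, map_mul, map_mul,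
      ← RatFunc.algebraMap_C (K := ℂ) e, map_mul]
    field_simp
  -- coprimality facts
  have cop_qv : IsCoprime q v := by
    apply coprime_of_no_common_root hq0
    intro z hz1 hz2
    exact hdisj (z : OnePoint ℂ) ⟨Or.inl ⟨z, rfl, hz2⟩, Or.inl ⟨z, rfl, hz1⟩⟩
  have cop_gv : IsCoprime g v := by
    apply coprime_of_no_common_root hg0
    intro z hz1 hz2
    have hqz2 : q.eval z ≠ 0 := eval_ne_zero_of_isCoprime cop_gq hz1
    have hpz : p.eval z = c * q.eval z := by
      have h := hz1; rw [hg_def] at h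
      simp only [Polynomial.eval_sub, Polynomial.eval_mul, Polynomial.eval_C] at h
      linear_combination h
    exact hsol (z : OnePoint ℂ) ⟨Or.inl ⟨z, rfl, hqz2, hpz⟩, Or.inl ⟨z, rfl, hz2⟩⟩
  have cop_Nv : IsCoprime N v := by
    have h1 : N = u * g + v * (Polynomial.C e * q) := by rw [hN_def]; ring
    rw [h1]; exact (cop_uv.mul_left cop_gv).add_mul_left_left _
  have cop_eg : IsCoprime (Polynomial.C e) g :=
    ⟨Polynomial.C e⁻¹, 0, by rw [← Polynomial.C_mul, inv_mul_cancel₀ he]; simp⟩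
  have cop_Ng : IsCoprime N g := by
    have h1 : N = Polynomial.C e * (q * v) + g * u := by rw [hN_def]; ring
    rw [h1]
    exact ((cop_eg.mul_left (cop_gq.symm.mul_left cop_gv.symm)).add_mul_left_left _)
  have cop_N_vg : IsCoprime N (v * g) := cop_Nv.mul_right cop_Ng
  -- N ≠ 0
  have hN0 : N ≠ 0 := by
    intro h0
    have hunit : IsUnit (v * g) := isCoprime_zero_left.mp (by rwa [h0] at cop_N_vg)
    have hvu : IsUnit v := isUnit_of_mul_isUnit_left hunit
    have hgu : IsUnit g := isUnit_of_mul_isUnit_right hunit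
    have hv1 : v = 1 := hvM.eq_one_of_isUnit hvu
    have hγdef : g = Polynomial.C (g.coeff 0) :=
      Polynomial.eq_C_of_natDegree_eq_zero (Polynomial.natDegree_eq_zero_of_isUnit hgu)
    set γ := g.coeff 0 with hγ_def
    have hγ0 : γ ≠ 0 := by
      intro h; rw [h, map_zero] at hγdef; exact hg0 hγdef
    have heq : u * Polynomial.C γ = -(Polynomial.C e * (q * 1)) := by
      have := h0; rw [hN_def, hv1] at this; linear_combination this - u * hγdef
    have hq_eq : q = Polynomial.C (e⁻¹ * -γ) * u := by
      have h2 : Polynomial.C e * q = Polynomial.C (-γ) * u := by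
        rw [map_neg]; linear_combination heq
      calc q = Polynomial.C e⁻¹ * (Polynomial.C e * q) := by
              rw [← mul_assoc, ← Polynomial.C_mul, inv_mul_cancel₀ he]; simp
        _ = Polynomial.C (e⁻¹ * -γ) * u := by rw [h2, ← mul_assoc, ← Polynomial.C_mul]
    have hcoef0 : e⁻¹ * -γ ≠ 0 := by
      simp only [ne_eq, mul_eq_zero, inv_eq_zero, neg_eq_zero, not_or]
      exact ⟨he, hγ0⟩
    have hdq : q.natDegree = u.natDegree := by
      rw [hq_eq, Polynomial.natDegree_C_mul hcoef0]
    rcases Nat.eq_zero_or_pos u.natDegree with hdu0 | hdupos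
    · rw [hv1] at cnt_n
      simp only [Polynomial.natDegree_one, hdu0, lt_irrefl, if_false, add_zero,
        if_neg (lt_irrefl 0)] at cnt_n
      omega
    · have hp_eq : p = Polynomial.C γ + Polynomial.C c * q := by
        rw [← hγdef, hg_def]; ring
      have hdple : p.natDegree ≤ q.natDegree := by
        rw [hp_eq]
        refine (Polynomial.natDegree_add_le _ _).trans (max_le ?_ ?_)
        · simp [Polynomial.natDegree_C]
        · exact Polynomial.natDegree_C_mul_le _ _
      have hdq0 : q.natDegree ≠ 0 := by omega
      have hcoeff : p.coeff q.natDegree = c * q.leadingCoeff := by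
        rw [hp_eq, Polynomial.coeff_add, Polynomial.coeff_C, if_neg hdq0,
          Polynomial.coeff_C_mul, Polynomial.coeff_natDegree, zero_add]
      have hvlt : v.natDegree < u.natDegree := by
        rw [hv1]; simpa [Polynomial.natDegree_one] using hdupos
      exact hsol ∞ ⟨Or.inr ⟨rfl, hdple, hcoeff⟩, Or.inr ⟨rfl, hvlt⟩⟩
  -- normalize
  set γ := g.leadingCoeff with hγ_def
  have hγ0 : γ ≠ 0 := Polynomial.leadingCoeff_ne_zero.mpr hg0
  set g1 := g * Polynomial.C γ⁻¹ with hg1_def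
  have hg1M : g1.Monic := Polynomial.monic_mul_leadingCoeff_inv hg0
  have hg10 : g1 ≠ 0 := hg1M.ne_zero
  have hDM : (v * g1).Monic := hvM.mul hg1M
  set N1 := N * Polynomial.C γ⁻¹ with hN1_def
  have hCγ : (Polynomial.C γ⁻¹ : ℂ[X]) ≠ 0 := by
    simp [Polynomial.C_eq_zero, inv_eq_zero, hγ0]
  have hx : algebraMap ℂ[X] (RatFunc ℂ) (Polynomial.C γ⁻¹) ≠ 0 := RatFunc.algebraMap_ne_zero hCγ
  have key2 : rn2 = algebraMap ℂ[X] (RatFunc ℂ) N1 / algebraMap ℂ[X] (RatFunc ℂ) (v * g1) := by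
    rw [key, hN1_def, hg1_def]
    simp only [map_mul]
    rw [← mul_assoc, mul_div_mul_right _ _ hx]
  have cop1 : IsCoprime N1 (v * g1) := by
    rw [hN1_def, hg1_def]
    have h1 : v * (g * Polynomial.C γ⁻¹) = v * g * Polynomial.C γ⁻¹ := by ring
    rw [h1]
    exact (isCoprime_mul_unit_right ((Polynomial.isUnit_C).mpr (inv_ne_zero hγ0).isUnit) _ _).mpr
      cop_N_vg
  obtain ⟨hnum2, hden2⟩ := num_denom_eq_of_coprime hDM cop1 key2
  have hdg1 : g1.natDegree = g.natDegree := by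
    rw [hg1_def, Polynomial.natDegree_mul hg0 hCγ, Polynomial.natDegree_C, add_zero]
  have hdN1 : N1.natDegree = N.natDegree := by
    rw [hN1_def, Polynomial.natDegree_mul hN0 hCγ, Polynomial.natDegree_C, add_zero]
  have hdD : (v * g1).natDegree = v.natDegree + g.natDegree := by
    rw [Polynomial.natDegree_mul hv0 hg10, hdg1]
  have cnt_2 : (poleSet rn2).ncard = (v.natDegree + g.natDegree) +
      (if v.natDegree + g.natDegree < N.natDegree then 1 else 0) := by
    rw [ncard_poleSet rn2 hsn2.1, hnum2, hden2, hdD, hdN1]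
  have hsimple2 : N.natDegree ≤ v.natDegree + g.natDegree + 1 := by
    have h := hsn2.2
    rw [hnum2, hden2, hdD, hdN1] at h
    exact h
  have hdug : (u * g).natDegree = u.natDegree + g.natDegree := Polynomial.natDegree_mul hu0 hg0
  have hCe : (Polynomial.C e : ℂ[X]) ≠ 0 := by simp [Polynomial.C_eq_zero, he]
  have hdqv : (Polynomial.C e * (q * v)).natDegree = q.natDegree + v.natDegree := by
    rw [Polynomial.natDegree_mul hCe (mul_ne_zero hq0 hv0), Polynomial.natDegree_C,
      Polynomial.natDegree_mul hq0 hv0, zero_add]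
  have hNle : N.natDegree ≤ max (u.natDegree + g.natDegree) (q.natDegree + v.natDegree) := by
    calc N.natDegree ≤ max ((u * g).natDegree) ((Polynomial.C e * (q * v)).natDegree) :=
          Polynomial.natDegree_add_le _ _
      _ = _ := by rw [hdug, hdqv]
  rw [cnt_2]
  by_cases hc1 : q.natDegree < p.natDegree
  · rw [if_pos hc1] at cnt_n1
    have hdg : g.natDegree = p.natDegree := by
      rw [hg_def]
      apply Polynomial.natDegree_sub_eq_left_of_natDegree_lt
      exact lt_of_le_of_lt (Polynomial.natDegree_C_mul_le _ _) hc1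
    by_cases hc2 : v.natDegree < u.natDegree
    · rw [if_pos hc2] at cnt_n
      have hdN : N.natDegree = u.natDegree + g.natDegree := by
        rw [hN_def, Polynomial.natDegree_add_eq_left_of_natDegree_lt
          (by rw [hdqv, hdug]; omega), hdug]
      split_ifs with h <;> omega
    · rw [if_neg hc2] at cnt_n
      have hNle' : N.natDegree ≤ v.natDegree + g.natDegree :=
        hNle.trans (max_le (by omega) (by omega))
      split_ifs with h <;> omega
  · rw [if_neg hc1] at cnt_n1
    have hdp_le_q : p.natDegree ≤ q.natDegree := le_of_not_gt hc1
    have hdg_le : g.natDegree ≤ q.natDegree := by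
      rw [hg_def]
      exact (Polynomial.natDegree_sub_le _ _).trans
        (max_le hdp_le_q (Polynomial.natDegree_C_mul_le _ _))
    by_cases hc3 : p.coeff q.natDegree = c * q.leadingCoeff
    · have hgc : g.coeff q.natDegree = 0 := by
        rw [hg_def, Polynomial.coeff_sub, Polynomial.coeff_C_mul, Polynomial.coeff_natDegree, hc3,
          sub_self]
      have hdg_lt : g.natDegree < q.natDegree := by
        rcases lt_or_eq_of_le hdg_le with h | h
        · exact h
        · exact absurd (Polynomial.leadingCoeff_eq_zero.mp
            (by rw [Polynomial.leadingCoeff, h]; exact hgc)) hg0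
      have hdu2 : u.natDegree ≤ v.natDegree := by
        by_contra hcon
        push_neg at hcon
        exact hsol ∞ ⟨Or.inr ⟨rfl, hdp_le_q, hc3⟩, Or.inr ⟨rfl, hcon⟩⟩
      rw [if_neg (by omega : ¬ v.natDegree < u.natDegree)] at cnt_n
      have hdN : N.natDegree = q.natDegree + v.natDegree := by
        rw [hN_def, Polynomial.natDegree_add_eq_right_of_natDegree_lt
          (by rw [hdqv, hdug]; omega), hdqv]
      split_ifs with h <;> omega
    · have hdg_ge : q.natDegree ≤ g.natDegree := by
        apply Polynomial.le_natDegree_of_ne_zero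
        rw [hg_def, Polynomial.coeff_sub, Polynomial.coeff_C_mul, Polynomial.coeff_natDegree]
        exact sub_ne_zero.mpr hc3
      have hdg : g.natDegree = q.natDegree := le_antisymm hdg_le hdg_ge
      by_cases hc2 : v.natDegree < u.natDegree
      · rw [if_pos hc2] at cnt_n
        have hdN : N.natDegree = u.natDegree + g.natDegree := by
          rw [hN_def, Polynomial.natDegree_add_eq_left_of_natDegree_lt
            (by rw [hdqv, hdug]; omega), hdug]
        split_ifs with h <;> omega
      · rw [if_neg hc2] at cnt_n
        have hNle' : N.natDegree ≤ v.natDegree + g.natDegree :=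
          hNle.trans (max_le (by omega) (by omega))
        split_ifs with h <;> omega

/-- For the recursively defined rational functions `r 0 = z`, `r 1 = ε₁/(z - a₁)`,
`r (n+2) = r n + ε (n+2)/(r (n+1) - a (n+2))`, under the disjointness and simplicity
assumptions, the number of poles of `r n` equals the `n`-th Fibonacci number `k n` and all
poles of `r n` are simple. -/
theorem card_poleSet_eq_fib (ε a : ℕ → ℂ) (hε : ∀ n, ε n ≠ 0)
    (r : ℕ → RatFunc ℂ)
    (h0 : r 0 = RatFunc.X)
    (h1 : r 1 = RatFunc.C (ε 1) / (RatFunc.X - RatFunc.C (a 1)))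
    (hrec : ∀ n, r (n + 2) = r n + RatFunc.C (ε (n + 2)) / (r (n + 1) - RatFunc.C (a (n + 2))))
    (hdisj : ∀ n, poleSet (r n) ∩ poleSet (r (n + 1)) = ∅)
    (hsimple : ∀ n, SimplePoles (r n))
    (hzsimple : ∀ n z, (r (n + 1) - RatFunc.C (a (n + 2))).num.rootMultiplicity z ≤ 1)
    (hsol : ∀ n, solSet (r (n + 1)) (a (n + 2)) ∩ poleSet (r n) = ∅)
    (k : ℕ → ℕ) (hk0 : k 0 = 1) (hk1 : k 1 = 1) (hkrec : ∀ n, k (n + 2) = k (n + 1) + k n) :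
    ∀ n, (poleSet (r n)).ncard = k n ∧ SimplePoles (r n) := by
  have kpos : ∀ n, 1 ≤ k n := by
    intro n
    induction n using Nat.twoStepInduction with
    | zero => simp [hk0]
    | one => simp [hk1]
    | more n ih1 ih2 => rw [hkrec]; omega
  have base0 : (poleSet (r 0)).ncard = k 0 := by
    rw [ncard_poleSet (r 0) (hsimple 0).1, hk0, h0, RatFunc.num_X, RatFunc.denom_X]
    simp
  have base1 : (poleSet (r 1)).ncard = k 1 := by
    have hB : (Polynomial.X - Polynomial.C (a 1)).Monic := Polynomial.monic_X_sub_C _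
    have hcop : IsCoprime (Polynomial.C (ε 1)) (Polynomial.X - Polynomial.C (a 1)) :=
      ⟨Polynomial.C (ε 1)⁻¹, 0, by
        rw [← Polynomial.C_mul, inv_mul_cancel₀ (hε 1)]; simp⟩
    have hrep : r 1 = algebraMap ℂ[X] (RatFunc ℂ) (Polynomial.C (ε 1)) /
        algebraMap ℂ[X] (RatFunc ℂ) (Polynomial.X - Polynomial.C (a 1)) := by
      rw [h1, map_sub]
      simp only [RatFunc.algebraMap_C, RatFunc.algebraMap_X]
    obtain ⟨hn1, hd1⟩ := num_denom_eq_of_coprime hB hcop hrep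
    rw [ncard_poleSet (r 1) (hsimple 1).1, hk1, hn1, hd1]
    simp [Polynomial.natDegree_X_sub_C, Polynomial.natDegree_C]
  have main : ∀ n, (poleSet (r n)).ncard = k n ∧ (poleSet (r (n + 1))).ncard = k (n + 1) := by
    intro n
    induction n with
    | zero => exact ⟨base0, base1⟩
    | succ m ih =>
      refine ⟨ih.2, ?_⟩
      rw [hkrec m]
      exact step_lemma (hε (m + 2)) (hrec m) (hdisj m) (hsimple m) (hsimple (m + 1))
        (hsimple (m + 2)) (hsol m) ih.1 ih.2 (kpos m) (kpos (m + 1))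
  exact fun n => ⟨(main n).1, hsimple n⟩
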